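/- arXiv:2501.11718 — 2 statements merged into one kernel-verified Lean document; each statement's English description precedes it below -/
import Mathlib

section
/- Let f_n(j) be the number of weakly increasing parking functions of length n whose last entry equals j. Then for n ≥ 2 and 1 < j < n, f_n(j) = f_n(j−1) + f_{n−1}(j); moreover f_n(n) = f_n(n−1). -/
/-- `wipfLast n j` is the number of weakly increasing parking functions of length `n`
(encoded `0`-indexed: `α : Fin n → Fin n` monotone with `αᵢ ≤ i`) whose (1-indexed)
last entry equals `j`. -/
noncomputable def wipfLast (n j : ℕ) : ℕ :=
  Nat.card {α : Fin n → Fin n // (Monotone α ∧ ∀ i, (α i : ℕ) ≤ (i : ℕ)) ∧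
    ∀ _ : 0 < n, (α ⟨n - 1, by omega⟩ : ℕ) + 1 = j}

lemma card_split {X : Type*} [Finite X] (A B : X → Prop) :
    Nat.card {x // A x} = Nat.card {x // A x ∧ B x} + Nat.card {x // A x ∧ ¬ B x} := by
  classical
  rw [← Nat.card_sum]
  exact Nat.card_congr (((Equiv.sumCompl (fun x : {x // A x} => B x.1)).symm.trans
    (Equiv.sumCongr (Equiv.subtypeSubtypeEquivSubtypeInter A B)
      (Equiv.subtypeSubtypeEquivSubtypeInter A (fun x => ¬ B x)))))

lemma ne_last_le {n : ℕ} (hn : 2 ≤ n) (i : Fin n) (hi : i ≠ ⟨n - 1, by omega⟩) :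
    (i : ℕ) ≤ n - 2 := by
  have h1 := i.isLt
  have h2 : (i : ℕ) ≠ n - 1 := fun h => hi (Fin.ext h)
  omega

lemma update_good {n : ℕ} (hn : 2 ≤ n) (α : Fin n → Fin n) (hm : Monotone α)
    (hp : ∀ i, (α i : ℕ) ≤ (i : ℕ)) (v : Fin n) (hv : α ⟨n - 2, by omega⟩ ≤ v) :
    Monotone (Function.update α ⟨n - 1, by omega⟩ v) ∧
      ∀ i, ((Function.update α ⟨n - 1, by omega⟩ v) i : ℕ) ≤ (i : ℕ) := by
  constructor
  · intro i k hik
    rcases eq_or_ne k ⟨n - 1, by omega⟩ with hk | hk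
    · rcases eq_or_ne i ⟨n - 1, by omega⟩ with hi | hi
      · rw [hi, hk]
      · rw [hk, Function.update_self, Function.update_of_ne hi]
        refine le_trans ?_ hv
        exact hm (by rw [Fin.le_def]; exact ne_last_le hn i hi)
    · have hi : i ≠ ⟨n - 1, by omega⟩ := by
        intro h
        apply hk
        have := ne_last_le hn k hk
        have h2 := hik
        rw [h] at h2
        rw [Fin.le_def] at h2
        simp at h2
        omega
      rw [Function.update_of_ne hi, Function.update_of_ne hk]
      exact hm hik
  · intro i
    rcases eq_or_ne i ⟨n - 1, by omega⟩ with hi | hi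
    · subst hi
      rw [Function.update_self]
      have := v.isLt
      simp
      omega
    · rw [Function.update_of_ne hi]
      exact hp i

/-- Update-last bijection: WIPFs with last = j and penult ≠ j correspond to WIPFs with last = j-1. -/
def updEquiv (n j : ℕ) (hn : 2 ≤ n) (hj : 2 ≤ j) (hjn : j ≤ n) :
    {α : Fin n → Fin n // ((Monotone α ∧ ∀ i, (α i : ℕ) ≤ (i : ℕ)) ∧
        ∀ _ : 0 < n, (α ⟨n - 1, by omega⟩ : ℕ) + 1 = j) ∧
        ¬ ((α ⟨n - 2, by omega⟩ : ℕ) + 1 = j)} ≃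
    {α : Fin n → Fin n // (Monotone α ∧ ∀ i, (α i : ℕ) ≤ (i : ℕ)) ∧
        ∀ _ : 0 < n, (α ⟨n - 1, by omega⟩ : ℕ) + 1 = j - 1} where
  toFun := fun a =>
    ⟨Function.update a.1 ⟨n - 1, by omega⟩ ⟨j - 2, by omega⟩, by
    obtain ⟨α, ⟨⟨hm, hp⟩, hl⟩, hpen⟩ := a
    simp only
    have hl' := hl (by omega)
    have hpen' : (α ⟨n - 2, by omega⟩ : ℕ) ≤ j - 2 := by
      have h1 : α ⟨n - 2, by omega⟩ ≤ α ⟨n - 1, by omega⟩ := hm (by rw [Fin.le_def]; simp; omega)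
      rw [Fin.le_def] at h1
      omega
    have hg := update_good hn α hm hp ⟨j - 2, by omega⟩ (by rw [Fin.le_def]; simpa using hpen')
    refine ⟨hg, fun _ => ?_⟩
    rw [Function.update_self]
    simp
    omega⟩
  invFun := fun a =>
    ⟨Function.update a.1 ⟨n - 1, by omega⟩ ⟨j - 1, by omega⟩, by
    obtain ⟨α, ⟨hm, hp⟩, hl⟩ := a
    simp only
    have hl' := hl (by omega)
    have hpen' : (α ⟨n - 2, by omega⟩ : ℕ) ≤ j - 2 := by
      have h1 : α ⟨n - 2, by omega⟩ ≤ α ⟨n - 1, by omega⟩ := hm (by rw [Fin.le_def]; simp; omega)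
      rw [Fin.le_def] at h1
      omega
    have hg := update_good hn α hm hp ⟨j - 1, by omega⟩
      (by rw [Fin.le_def]; simp; omega)
    have hne : (⟨n - 2, by omega⟩ : Fin n) ≠ ⟨n - 1, by omega⟩ := by
      simp [Fin.ext_iff]; omega
    refine ⟨⟨hg, fun _ => ?_⟩, ?_⟩
    · rw [Function.update_self]; simp; omega
    · rw [Function.update_of_ne hne]
      omega⟩
  left_inv := by
    rintro ⟨α, ⟨⟨⟨hm, hp⟩, hl⟩, hpen⟩⟩
    apply Subtype.ext
    simp only
    rw [Function.update_idem]
    have : (⟨j - 1, by omega⟩ : Fin n) = α ⟨n - 1, by omega⟩ := by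
      have := hl (by omega)
      simp [Fin.ext_iff]
      omega
    rw [this, Function.update_eq_self]
  right_inv := by
    rintro ⟨α, ⟨⟨hm, hp⟩, hl⟩⟩
    apply Subtype.ext
    simp only
    rw [Function.update_idem]
    have : (⟨j - 2, by omega⟩ : Fin n) = α ⟨n - 1, by omega⟩ := by
      have := hl (by omega)
      simp [Fin.ext_iff]
      omega
    rw [this, Function.update_eq_self]

/-- Drop-last bijection: WIPFs of length n with last = penult = j correspond
to WIPFs of length n-1 with last = j. -/
def dropEquiv (n j : ℕ) (hn : 2 ≤ n) (hj1 : 1 ≤ j) (hj2 : j ≤ n - 1) :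
    {α : Fin n → Fin n // ((Monotone α ∧ ∀ i, (α i : ℕ) ≤ (i : ℕ)) ∧
        ∀ _ : 0 < n, (α ⟨n - 1, by omega⟩ : ℕ) + 1 = j) ∧
        ((α ⟨n - 2, by omega⟩ : ℕ) + 1 = j)} ≃
    {β : Fin (n - 1) → Fin (n - 1) // (Monotone β ∧ ∀ i, (β i : ℕ) ≤ (i : ℕ)) ∧
        ∀ _ : 0 < n - 1, (β ⟨n - 1 - 1, by omega⟩ : ℕ) + 1 = j} where
  toFun := fun a =>
    ⟨fun i => ⟨(a.1 ⟨(i : ℕ), by have := i.isLt; omega⟩ : ℕ), by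
      have h1 := a.2.1.1.2 ⟨(i : ℕ), by have := i.isLt; omega⟩
      have := i.isLt
      simp at h1 ⊢
      omega⟩, by
    obtain ⟨α, ⟨⟨hm, hp⟩, hl⟩, hpen⟩ := a
    refine ⟨?_, fun _ => ?_⟩
    · constructor
      · intro i k hik
        rw [Fin.le_def]
        simp only
        have : α ⟨(i : ℕ), by have := i.isLt; omega⟩ ≤ α ⟨(k : ℕ), by have := k.isLt; omega⟩ := by
          apply hm
          rw [Fin.le_def]
          exact hik
        exact this
      · intro i
        have h1 := hp ⟨(i : ℕ), by have := i.isLt; omega⟩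
        simpa using h1
    · simpa [Nat.sub_sub] using hpen⟩
  invFun := fun a =>
    ⟨fun i => if h : (i : ℕ) < n - 1 then
        ⟨(a.1 ⟨(i : ℕ), h⟩ : ℕ), by have := (a.1 ⟨(i : ℕ), h⟩).isLt; omega⟩
      else ⟨j - 1, by omega⟩, by
    obtain ⟨β, ⟨hm, hp⟩, hl⟩ := a
    have hl' := hl (by omega)
    refine ⟨⟨⟨?_, ?_⟩, fun _ => ?_⟩, ?_⟩
    · intro i k hik
      rw [Fin.le_def]
      by_cases hi : (i : ℕ) < n - 1
      · by_cases hk : (k : ℕ) < n - 1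
        · simp only [dif_pos hi, dif_pos hk]
          have : β ⟨(i : ℕ), hi⟩ ≤ β ⟨(k : ℕ), hk⟩ := hm (by rw [Fin.le_def]; exact hik)
          exact this
        · simp only [dif_pos hi, dif_neg hk]
          have : β ⟨(i : ℕ), hi⟩ ≤ β ⟨n - 1 - 1, by omega⟩ := by
            apply hm
            rw [Fin.le_def]
            simp
            omega
          rw [Fin.le_def] at this
          simp at this ⊢
          omega
      · have hk : ¬ (k : ℕ) < n - 1 := by
          rw [Fin.le_def] at hik
          omega
        simp only [dif_neg hi, dif_neg hk]
        omega
    · intro i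
      by_cases hi : (i : ℕ) < n - 1
      · simp only [dif_pos hi]
        exact hp ⟨(i : ℕ), hi⟩
      · simp only [dif_neg hi]
        have := i.isLt
        simp
        omega
    · have h : ¬ ((n - 1 : ℕ) < n - 1) := by omega
      simp only [dif_neg h]
      show j - 1 + 1 = j
      omega
    · have h : (n - 2 : ℕ) < n - 1 := by omega
      simp only [dif_pos h]
      exact hl'⟩
  left_inv := by
    rintro ⟨α, ⟨⟨⟨hm, hp⟩, hl⟩, hpen⟩⟩
    apply Subtype.ext
    funext i
    simp only
    by_cases hi : (i : ℕ) < n - 1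
    · rw [dif_pos hi]
    · rw [dif_neg hi]
      have hie : i = ⟨n - 1, by omega⟩ := by
        apply Fin.ext
        have := i.isLt
        show (i : ℕ) = n - 1
        omega
      have hv : (α i : ℕ) + 1 = j := by rw [hie]; exact hl (by omega)
      apply Fin.ext
      show j - 1 = (α i : ℕ)
      omega
  right_inv := by
    rintro ⟨β, ⟨⟨hm, hp⟩, hl⟩⟩
    apply Subtype.ext
    funext i
    simp only
    have hi : (i : ℕ) < n - 1 := i.isLt
    apply Fin.ext
    simp only [dif_pos hi]

/-- For `n ≥ 2` and `1 < j < n`, `f_n(j) = f_n(j−1) + f_{n−1}(j)`;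
moreover `f_n(n) = f_n(n−1)`. -/
theorem stmt9 (n j : ℕ) (hn : 2 ≤ n) (hj1 : 1 < j) (hj2 : j < n) :
    wipfLast n j = wipfLast n (j - 1) + wipfLast (n - 1) j ∧
      wipfLast n n = wipfLast n (n - 1) := by
  have hlt1 : n - 1 < n := by omega
  have hlt2 : n - 2 < n := by omega
  have ha1 : 1 ≤ j := by omega
  have ha2 : j ≤ n - 1 := by omega
  have ha3 : 2 ≤ j := by omega
  have ha4 : j ≤ n := by omega
  have ha5 : 2 ≤ n := hn
  have ha6 : n ≤ n := le_rfl
  constructor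
  · have hsplit := card_split
      (fun α : Fin n → Fin n => (Monotone α ∧ ∀ i, (α i : ℕ) ≤ (i : ℕ)) ∧
        ∀ _ : 0 < n, (α ⟨n - 1, hlt1⟩ : ℕ) + 1 = j)
      (fun α => (α ⟨n - 2, hlt2⟩ : ℕ) + 1 = j)
    have e1 : Nat.card {α : Fin n → Fin n // ((Monotone α ∧ ∀ i, (α i : ℕ) ≤ (i : ℕ)) ∧
        ∀ _ : 0 < n, (α ⟨n - 1, hlt1⟩ : ℕ) + 1 = j) ∧
        ((α ⟨n - 2, hlt2⟩ : ℕ) + 1 = j)} = wipfLast (n - 1) j := by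
      unfold wipfLast
      exact Nat.card_congr (dropEquiv n j hn ha1 ha2)
    have e2 : Nat.card {α : Fin n → Fin n // ((Monotone α ∧ ∀ i, (α i : ℕ) ≤ (i : ℕ)) ∧
        ∀ _ : 0 < n, (α ⟨n - 1, hlt1⟩ : ℕ) + 1 = j) ∧
        ¬ ((α ⟨n - 2, hlt2⟩ : ℕ) + 1 = j)} = wipfLast n (j - 1) := by
      unfold wipfLast
      exact Nat.card_congr (updEquiv n j hn ha3 ha4)
    exact hsplit.trans (by rw [e1, e2]; exact Nat.add_comm _ _)
  · have hsplit := card_split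
      (fun α : Fin n → Fin n => (Monotone α ∧ ∀ i, (α i : ℕ) ≤ (i : ℕ)) ∧
        ∀ _ : 0 < n, (α ⟨n - 1, hlt1⟩ : ℕ) + 1 = n)
      (fun α => (α ⟨n - 2, hlt2⟩ : ℕ) + 1 = n)
    have e1 : Nat.card {α : Fin n → Fin n // ((Monotone α ∧ ∀ i, (α i : ℕ) ≤ (i : ℕ)) ∧
        ∀ _ : 0 < n, (α ⟨n - 1, hlt1⟩ : ℕ) + 1 = n) ∧
        ((α ⟨n - 2, hlt2⟩ : ℕ) + 1 = n)} = 0 := by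
      rw [Nat.card_eq_zero]
      left
      constructor
      rintro ⟨α, ⟨⟨⟨hm, hp⟩, hl⟩, hpen⟩⟩
      have h2 : (α ⟨n - 2, hlt2⟩ : ℕ) ≤ n - 2 := hp ⟨n - 2, hlt2⟩
      clear hsplit hm hl hp
      omega
    have e2 : Nat.card {α : Fin n → Fin n // ((Monotone α ∧ ∀ i, (α i : ℕ) ≤ (i : ℕ)) ∧
        ∀ _ : 0 < n, (α ⟨n - 1, hlt1⟩ : ℕ) + 1 = n) ∧
        ¬ ((α ⟨n - 2, hlt2⟩ : ℕ) + 1 = n)} = wipfLast n (n - 1) := by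
      unfold wipfLast
      exact Nat.card_congr (updEquiv n n hn ha5 ha6)
    exact hsplit.trans (by rw [e1, e2]; exact Nat.zero_add _)
end

section
/- Let α be a weakly increasing parking function of length n with lucky set L ⊆ [n] (the set of indices i such that spot αᵢ is empty when car i arrives, i.e., car i parks in its preferred spot under the classical protocol). Then 1 ∈ L, and if L = {l₁ < l₂ < ⋯ < l_k}, the number of weakly increasing parking functions of length n with lucky set exactly L is ∏_{j=1}^{k} C_{x_j}, where x_j = l_{j+1} − l_j − 1 for 1 ≤ j < k, x_k = n − l_k, and C_m is the m-th Catalan number. -/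
/-- A weakly increasing parking function of length `n`, encoded `0`-indexed:
`α : Fin n → Fin n` monotone with `(α i) ≤ i`; the 1-indexed value of entry `i` is
`(α i) + 1`.  Car `i` is lucky iff `α i = i` (i.e. it parks in its preferred spot). -/
def IsWIPF {n : ℕ} (α : Fin n → Fin n) : Prop :=
  Monotone α ∧ ∀ i, (α i : ℕ) ≤ (i : ℕ)

/-- the "block" condition: positions 1..a are non-lucky and position a+1 (if any) is lucky -/
def FibN (a : ℕ) {n : ℕ} (δ : Fin n → Fin n) : Prop :=
  (∀ t : Fin n, 1 ≤ (t : ℕ) → (t : ℕ) ≤ a → (δ t : ℕ) < (t : ℕ)) ∧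
  (∀ t : Fin n, (t : ℕ) = a + 1 → (δ t : ℕ) = (t : ℕ))

def glue {a b : ℕ} (γ : Fin a → Fin a) (ε : Fin b → Fin b) (i : Fin (a+1+b)) : Fin (a+1+b) :=
  if h2 : (i : ℕ) ≤ a then
    (if h0 : (i : ℕ) = 0 then ⟨0, lt_of_le_of_lt (Nat.zero_le _) i.isLt⟩
     else
       let t : Fin a := ⟨(i : ℕ) - 1, by omega⟩
       ⟨(γ t : ℕ), by have := (γ t).isLt; omega⟩)
  else
    let s : Fin b := ⟨(i : ℕ) - (a+1), by have := i.isLt; omega⟩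
    ⟨a + 1 + (ε s : ℕ), by have := (ε s).isLt; omega⟩

lemma glue_zero {a b : ℕ} (γ : Fin a → Fin a) (ε : Fin b → Fin b) (i : Fin (a+1+b))
    (h : (i : ℕ) = 0) : (glue γ ε i : ℕ) = 0 := by
  simp [glue, h]

lemma glue_mid {a b : ℕ} (γ : Fin a → Fin a) (ε : Fin b → Fin b) (i : Fin (a+1+b))
    (h1 : 1 ≤ (i : ℕ)) (h2 : (i : ℕ) ≤ a) :
    (glue γ ε i : ℕ) = (γ ⟨(i : ℕ) - 1, by omega⟩ : ℕ) := by
  simp [glue, h2, (show i ≠ 0 by rintro rfl; simp at h1)]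

lemma glue_hi {a b : ℕ} (γ : Fin a → Fin a) (ε : Fin b → Fin b) (i : Fin (a+1+b))
    (h : a + 1 ≤ (i : ℕ)) :
    (glue γ ε i : ℕ) = a + 1 + (ε ⟨(i : ℕ) - (a+1), by have := i.isLt; omega⟩ : ℕ) := by
  simp [glue, Nat.not_le.mpr (by omega : a < (i:ℕ))]

def epsOf (a b : ℕ) (β : Fin (a+1+b) → Fin (a+1+b)) (s : Fin b) : Fin b :=
  let i : Fin (a+1+b) := ⟨a + 1 + (s : ℕ), by have := s.isLt; omega⟩
  ⟨(β i : ℕ) - (a + 1), by have h1 := (β i).isLt; have h2 := s.isLt; omega⟩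

lemma epsOf_val (a b : ℕ) (β : Fin (a+1+b) → Fin (a+1+b)) (s : Fin b) :
    (epsOf a b β s : ℕ) = (β ⟨a + 1 + (s : ℕ), by have := s.isLt; omega⟩ : ℕ) - (a+1) := rfl

lemma glue_wipf {a b : ℕ} {γ : Fin a → Fin a} {ε : Fin b → Fin b}
    (hγ : IsWIPF γ) (hε : IsWIPF ε) : IsWIPF (glue γ ε) := by
  constructor
  · intro i j hij
    rcases Nat.eq_zero_or_pos (i : ℕ) with hi0 | hi1
    · rw [Fin.le_def, glue_zero γ ε i hi0]; exact Nat.zero_le _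
    rcases le_or_gt (j : ℕ) a with hja | hja
    · -- both mid
      have hia : (i : ℕ) ≤ a := le_trans hij hja
      have hj1 : 1 ≤ (j : ℕ) := le_trans hi1 hij
      rw [Fin.le_def, glue_mid γ ε i hi1 hia, glue_mid γ ε j hj1 hja]
      exact hγ.1 (by simp [Fin.le_def]; omega)
    rcases le_or_gt (i : ℕ) a with hia | hia
    · rw [Fin.le_def, glue_mid γ ε i hi1 hia, glue_hi γ ε j (by omega)]
      have := (γ ⟨(i:ℕ)-1, by omega⟩).isLt
      omega
    · rw [Fin.le_def, glue_hi γ ε i (by omega), glue_hi γ ε j (by omega)]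
      have : (ε ⟨(i:ℕ)-(a+1), by have := i.isLt; omega⟩ : ℕ)
          ≤ (ε ⟨(j:ℕ)-(a+1), by have := j.isLt; omega⟩ : ℕ) :=
        hε.1 (by simp [Fin.le_def]; omega)
      omega
  · intro i
    rcases Nat.eq_zero_or_pos (i : ℕ) with hi0 | hi1
    · rw [glue_zero γ ε i hi0]; omega
    rcases le_or_gt (i : ℕ) a with hia | hia
    · rw [glue_mid γ ε i hi1 hia]
      have := hγ.2 ⟨(i:ℕ)-1, by omega⟩
      simp at this; omega
    · rw [glue_hi γ ε i (by omega)]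
      have := hε.2 ⟨(i:ℕ)-(a+1), by have := i.isLt; omega⟩
      simp at this; omega

lemma glue_fibN {a b : ℕ} {γ : Fin a → Fin a} {ε : Fin b → Fin b}
    (hγ : IsWIPF γ) (hε : IsWIPF ε) : FibN a (glue γ ε) := by
  constructor
  · intro t h1 h2
    rw [glue_mid γ ε t h1 h2]
    have := hγ.2 ⟨(t:ℕ)-1, by omega⟩
    simp at this; omega
  · intro t ht
    rw [glue_hi γ ε t (by omega)]
    have h0 : ((⟨(t:ℕ)-(a+1), by have := t.isLt; omega⟩ : Fin b) : ℕ) = 0 := by simp; omega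
    have := hε.2 ⟨(t:ℕ)-(a+1), by have := t.isLt; omega⟩
    omega

lemma epsOf_glue {a b : ℕ} (γ : Fin a → Fin a) (ε : Fin b → Fin b) :
    epsOf a b (glue γ ε) = ε := by
  funext s
  apply Fin.ext
  rw [epsOf_val, glue_hi γ ε _ (by simp)]
  simp

lemma glue_epsOf {a b : ℕ} (β : Fin (a+1+b) → Fin (a+1+b)) (hβ : IsWIPF β) (hF : FibN a β)
    (γ : Fin a → Fin a) (hγ : ∀ t : Fin a, (γ t : ℕ) = (β ⟨(t:ℕ)+1, by have := t.isLt; omega⟩ : ℕ)) :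
    glue γ (epsOf a b β) = β := by
  have bcon : ∀ (x y : Fin (a+1+b)), (x:ℕ) = (y:ℕ) → (β x : ℕ) = (β y : ℕ) := by
    intro x y h; rw [Fin.ext h]
  funext i
  apply Fin.ext
  rcases Nat.eq_zero_or_pos (i : ℕ) with hi0 | hi1
  · rw [glue_zero _ _ i hi0]
    have h0 : (i:ℕ) ≤ 0 := le_of_eq hi0
    have := hβ.2 i
    omega
  rcases le_or_gt (i : ℕ) a with hia | hia
  · rw [glue_mid _ _ i hi1 hia, hγ]
    exact bcon _ _ (by simp; omega)
  · rw [glue_hi _ _ i (by omega), epsOf_val]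
    have hge : a + 1 ≤ (β i : ℕ) := by
      have hlucky := hF.2 ⟨a+1, by have := i.isLt; omega⟩
      simp at hlucky
      have hmono := hβ.1 (show (⟨a+1, by have := i.isLt; omega⟩ : Fin (a+1+b)) ≤ i by
        simp [Fin.le_def]; omega)
      rw [Fin.le_def] at hmono
      omega
    have heq : (β ⟨a + 1 + (((⟨(i:ℕ)-(a+1), by have := i.isLt; omega⟩ : Fin b)) : ℕ), by
        have := i.isLt; simp; omega⟩ : ℕ) = (β i : ℕ) := bcon _ _ (by simp; omega)
    omega

lemma epsOf_wipf {a b : ℕ} {β : Fin (a+1+b) → Fin (a+1+b)} (hβ : IsWIPF β) (hF : FibN a β) :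
    IsWIPF (epsOf a b β) := by
  constructor
  · intro s s' hss
    rw [Fin.le_def, epsOf_val, epsOf_val]
    have := hβ.1 (show (⟨a+1+(s:ℕ), by have := s.isLt; omega⟩ : Fin (a+1+b))
        ≤ ⟨a+1+(s':ℕ), by have := s'.isLt; omega⟩ by
      rw [Fin.mk_le_mk]; exact Nat.add_le_add_left hss _)
    rw [Fin.le_def] at this
    omega
  · intro s
    rw [epsOf_val]
    have := hβ.2 ⟨a+1+(s:ℕ), by have := s.isLt; omega⟩
    simp at this
    omega

def gammaOf {a b : ℕ} (β : Fin (a+1+b) → Fin (a+1+b)) (hβ : IsWIPF β) (hF : FibN a β)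
    (t : Fin a) : Fin a :=
  ⟨(β ⟨(t:ℕ)+1, by have := t.isLt; omega⟩ : ℕ), by
    have h := hF.1 ⟨(t:ℕ)+1, by have := t.isLt; omega⟩ (by exact Nat.succ_le_succ (Nat.zero_le _)) (by exact t.isLt)
    have := t.isLt
    simp at h
    omega⟩

lemma gammaOf_val {a b : ℕ} (β : Fin (a+1+b) → Fin (a+1+b)) (hβ : IsWIPF β) (hF : FibN a β)
    (t : Fin a) : (gammaOf β hβ hF t : ℕ) = (β ⟨(t:ℕ)+1, by have := t.isLt; omega⟩ : ℕ) := rfl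

lemma gammaOf_wipf {a b : ℕ} {β : Fin (a+1+b) → Fin (a+1+b)} (hβ : IsWIPF β) (hF : FibN a β) :
    IsWIPF (gammaOf β hβ hF) := by
  constructor
  · intro t t' htt
    rw [Fin.le_def, gammaOf_val, gammaOf_val]
    have := hβ.1 (show (⟨(t:ℕ)+1, by have := t.isLt; omega⟩ : Fin (a+1+b))
        ≤ ⟨(t':ℕ)+1, by have := t'.isLt; omega⟩ by rw [Fin.mk_le_mk]; exact Nat.add_le_add_right htt 1)
    rw [Fin.le_def] at this
    exact this
  · intro t
    rw [gammaOf_val]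
    have h := hF.1 ⟨(t:ℕ)+1, by have := t.isLt; omega⟩ (by exact Nat.succ_le_succ (Nat.zero_le _)) (by exact t.isLt)
    simp at h
    omega

lemma gammaOf_glue {a b : ℕ} (γ : Fin a → Fin a) (ε : Fin b → Fin b) (hg : IsWIPF (glue γ ε))
    (hF : FibN a (glue γ ε)) : gammaOf (glue γ ε) hg hF = γ := by
  funext t
  apply Fin.ext
  rw [gammaOf_val, glue_mid γ ε _ (by exact Nat.succ_le_succ (Nat.zero_le _)) (by exact t.isLt)]
  exact congrArg (fun x => (γ x : ℕ)) (Fin.ext rfl)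

def splitEquiv (a b : ℕ) (Q : (Fin b → Fin b) → Prop) :
    {β : Fin (a+1+b) → Fin (a+1+b) // IsWIPF β ∧ FibN a β ∧ Q (epsOf a b β)} ≃
      {γ : Fin a → Fin a // IsWIPF γ} × {ε : Fin b → Fin b // IsWIPF ε ∧ Q ε} where
  toFun x := (⟨gammaOf x.1 x.2.1 x.2.2.1, gammaOf_wipf x.2.1 x.2.2.1⟩,
    ⟨epsOf a b x.1, epsOf_wipf x.2.1 x.2.2.1, x.2.2.2⟩)
  invFun y := ⟨glue y.1.1 y.2.1, glue_wipf y.1.2 y.2.2.1, glue_fibN y.1.2 y.2.2.1,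
    by rw [epsOf_glue]; exact y.2.2.2⟩
  left_inv x := by
    apply Subtype.ext
    exact glue_epsOf x.1 x.2.1 x.2.2.1 _ (fun t => rfl)
  right_inv y := by
    apply Prod.ext
    · apply Subtype.ext
      apply gammaOf_glue <;> [exact glue_wipf y.1.2 y.2.2.1; exact glue_fibN y.1.2 y.2.2.1]
    · apply Subtype.ext
      exact epsOf_glue y.1.1 y.2.1

theorem split_card_gen (a b : ℕ) (Q : (Fin b → Fin b) → Prop) :
    Nat.card {β : Fin (a+1+b) → Fin (a+1+b) // IsWIPF β ∧ FibN a β ∧ Q (epsOf a b β)} =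
      Nat.card {γ : Fin a → Fin a // IsWIPF γ} *
        Nat.card {ε : Fin b → Fin b // IsWIPF ε ∧ Q ε} := by
  rw [Nat.card_congr (splitEquiv a b Q), Nat.card_prod]

lemma card_fin_zero_subtype (p : (Fin 0 → Fin 0) → Prop) (hp : p finZeroElim) :
    Nat.card {x : Fin 0 → Fin 0 // p x} = 1 := by
  haveI : Unique {x : Fin 0 → Fin 0 // p x} :=
    { default := ⟨finZeroElim, hp⟩
      uniq := fun y => Subtype.ext (funext fun i => i.elim0) }
  exact Nat.card_unique

lemma wipf_fin_zero : IsWIPF (finZeroElim : Fin 0 → Fin 0) :=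
  ⟨fun i => i.elim0, fun i => i.elim0⟩

lemma fiber_card (n a b : ℕ) (h : n = a + 1 + b) :
    Nat.card {δ : Fin n → Fin n // IsWIPF δ ∧ FibN a δ} =
      Nat.card {γ : Fin a → Fin a // IsWIPF γ} * Nat.card {ε : Fin b → Fin b // IsWIPF ε} := by
  subst h
  have h1 := split_card_gen a b (fun _ => True)
  rw [Nat.card_congr (Equiv.subtypeEquivRight (p := fun β => IsWIPF β ∧ FibN a β)
    (q := fun β => IsWIPF β ∧ FibN a β ∧ True) (fun β => by tauto)), h1,
    Nat.card_congr (Equiv.subtypeEquivRight (p := fun ε : Fin b → Fin b => IsWIPF ε ∧ True)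
    (q := fun ε => IsWIPF ε) (fun ε => by tauto))]

lemma fibN_unique {m : ℕ} (δ : Fin (m+1) → Fin (m+1)) (hδ : IsWIPF δ) :
    ∃! a : Fin (m+1), FibN (a : ℕ) δ := by
  classical
  by_cases hex : ∃ t : Fin (m+1), 1 ≤ (t:ℕ) ∧ (δ t : ℕ) = (t:ℕ)
  · let S := Finset.univ.filter (fun t : Fin (m+1) => 1 ≤ (t:ℕ) ∧ (δ t:ℕ) = (t:ℕ))
    have hS : S.Nonempty := by
      obtain ⟨t, ht⟩ := hex; exact ⟨t, by simp only [S, Finset.mem_filter]; exact ⟨Finset.mem_univ t, ht⟩⟩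
    set t0 := S.min' hS with ht0def
    have ht0 : 1 ≤ (t0:ℕ) ∧ (δ t0:ℕ) = (t0:ℕ) := by
      have := S.min'_mem hS
      simp only [S, Finset.mem_filter] at this
      exact this.2
    have hmin : ∀ t : Fin (m+1), 1 ≤ (t:ℕ) → (δ t:ℕ) = (t:ℕ) → (t0:ℕ) ≤ (t:ℕ) :=
      fun t h1 h2 => S.min'_le t (by simp only [S, Finset.mem_filter]; exact ⟨Finset.mem_univ t, h1, h2⟩)
    refine ⟨⟨(t0:ℕ)-1, by have := t0.isLt; omega⟩, ⟨?_, ?_⟩, ?_⟩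
    · intro t h1 h2
      simp only at h2
      have hle := hδ.2 t
      rcases Nat.lt_or_ge (δ t : ℕ) (t:ℕ) with h | h
      · exact h
      · have heq : (δ t : ℕ) = (t:ℕ) := le_antisymm hle h
        have := hmin t h1 heq
        omega
    · intro t ht
      simp only at ht
      have : t = t0 := Fin.ext (by omega)
      rw [this, ht0.2]
    · intro a' ha'
      apply Fin.ext
      simp only
      rcases Nat.lt_trichotomy (a':ℕ) ((t0:ℕ)-1) with h | h | h
      · exfalso
        have hlt : (a':ℕ)+1 < m+1 := by have := t0.isLt; omega
        have := ha'.2 ⟨(a':ℕ)+1, hlt⟩ (by simp)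
        have := hmin ⟨(a':ℕ)+1, hlt⟩ (by simp) (by simpa using this)
        simp at this
        omega
      · exact h
      · exfalso
        have := ha'.1 t0 ht0.1 (by omega)
        omega
  · refine ⟨⟨m, by omega⟩, ⟨?_, ?_⟩, ?_⟩
    · intro t h1 h2
      have hle := hδ.2 t
      rcases Nat.lt_or_ge (δ t : ℕ) (t:ℕ) with h | h
      · exact h
      · exact absurd ⟨t, h1, le_antisymm hle h⟩ hex
    · intro t ht
      simp only at ht
      have := t.isLt
      omega
    · intro a' ha'
      apply Fin.ext
      simp only
      by_contra hne
      have hlt : (a':ℕ)+1 < m+1 := by have := a'.isLt; omega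
      have := ha'.2 ⟨(a':ℕ)+1, hlt⟩ (by simp)
      exact hex ⟨⟨(a':ℕ)+1, hlt⟩, by simp, by simpa using this⟩

lemma card_WIPF (m : ℕ) : Nat.card {δ : Fin m → Fin m // IsWIPF δ} = catalan m := by
  induction m using Nat.strong_induction_on with
  | _ m IH =>
    match m with
    | 0 => rw [card_fin_zero_subtype _ wipf_fin_zero, catalan_zero]
    | (m+1) =>
      classical
      let f : {δ : Fin (m+1) → Fin (m+1) // IsWIPF δ} → Fin (m+1) :=
        fun x => Fintype.choose _ (fibN_unique x.1 x.2)
      have hf : ∀ x, FibN ((f x : Fin (m+1)) : ℕ) x.1 :=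
        fun x => Fintype.choose_spec _ (fibN_unique x.1 x.2)
      have hfu : ∀ (x : {δ : Fin (m+1) → Fin (m+1) // IsWIPF δ}) (a : Fin (m+1)),
          FibN (a:ℕ) x.1 → f x = a := by
        intro x a ha
        obtain ⟨u, hu, huu⟩ := fibN_unique x.1 x.2
        rw [huu a ha, huu (f x) (hf x)]
      have fibEquiv : ∀ a : Fin (m+1),
          {x : {δ : Fin (m+1) → Fin (m+1) // IsWIPF δ} // f x = a} ≃
            {δ : Fin (m+1) → Fin (m+1) // IsWIPF δ ∧ FibN (a:ℕ) δ} := fun a =>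
        { toFun := fun z => ⟨z.1.1, z.1.2, by have := hf z.1; rwa [z.2] at this⟩
          invFun := fun w => ⟨⟨w.1, w.2.1⟩, hfu _ a w.2.2⟩
          left_inv := fun z => Subtype.ext (Subtype.ext rfl)
          right_inv := fun w => Subtype.ext rfl }
      have e : {δ : Fin (m+1) → Fin (m+1) // IsWIPF δ} ≃
          Σ a : Fin (m+1), {δ : Fin (m+1) → Fin (m+1) // IsWIPF δ ∧ FibN (a:ℕ) δ} :=
        (Equiv.sigmaFiberEquiv f).symm.trans (Equiv.sigmaCongrRight fibEquiv)
      rw [Nat.card_congr e]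
      letI : ∀ a : Fin (m+1), Fintype {δ : Fin (m+1) → Fin (m+1) // IsWIPF δ ∧ FibN (a:ℕ) δ} :=
        fun a => Fintype.ofFinite _
      rw [Nat.card_eq_fintype_card, Fintype.card_sigma]
      have hsum : ∀ a : Fin (m+1),
          Fintype.card {δ : Fin (m+1) → Fin (m+1) // IsWIPF δ ∧ FibN (a:ℕ) δ} =
            catalan (a:ℕ) * catalan (m - (a:ℕ)) := by
        intro a
        rw [← Nat.card_eq_fintype_card, fiber_card (m+1) (a:ℕ) (m - (a:ℕ)) (by have := a.isLt; omega),
          IH (a:ℕ) (by have := a.isLt; omega), IH (m - (a:ℕ)) (by omega)]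
      rw [Finset.sum_congr rfl (fun a _ => hsum a)]
      exact (catalan_succ m).symm

lemma epsOf_lucky_iff (a b : ℕ) (β : Fin (a+1+b) → Fin (a+1+b)) (hβ : IsWIPF β)
    (hA : ∀ t : Fin (a+1+b), (t:ℕ) = a+1 → (β t:ℕ) = (t:ℕ)) (s : Fin b) :
    (epsOf a b β s : ℕ) = (s:ℕ) ↔
      (β ⟨a+1+(s:ℕ), by have := s.isLt; omega⟩ : ℕ) = a+1+(s:ℕ) := by
  have hub := hβ.2 ⟨a+1+(s:ℕ), by have := s.isLt; omega⟩
  simp only at hub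
  have hl1 := hA ⟨a+1, by have := s.isLt; omega⟩ rfl
  simp only at hl1
  have hmono := hβ.1 (show (⟨a+1, by have := s.isLt; omega⟩ : Fin (a+1+b))
      ≤ ⟨a+1+(s:ℕ), by have := s.isLt; omega⟩ by rw [Fin.mk_le_mk]; omega)
  rw [Fin.le_def] at hmono
  rw [epsOf_val]
  omega

theorem split_card_P (n a b : ℕ) (h : n = a + 1 + b) (P : ℕ → Prop) (hP0 : P 0) :
    Nat.card {β : Fin n → Fin n // IsWIPF β ∧ ∀ i : Fin n,
        ((β i:ℕ) = (i:ℕ) ↔ ((i:ℕ) = 0 ∨ (a+1 ≤ (i:ℕ) ∧ P ((i:ℕ) - (a+1)))))} =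
      Nat.card {γ : Fin a → Fin a // IsWIPF γ} *
        Nat.card {ε : Fin b → Fin b // IsWIPF ε ∧ ∀ s : Fin b, ((ε s:ℕ) = (s:ℕ) ↔ P (s:ℕ))} := by
  subst h
  rw [← split_card_gen a b (fun ε => ∀ s : Fin b, ((ε s:ℕ) = (s:ℕ) ↔ P (s:ℕ)))]
  apply Nat.card_congr
  apply Equiv.subtypeEquivRight
  intro β
  constructor
  · rintro ⟨hW, hL⟩
    have hA : ∀ t : Fin (a+1+b), (t:ℕ) = a+1 → (β t:ℕ) = (t:ℕ) := by
      intro t ht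
      refine (hL t).2 (Or.inr ⟨by omega, ?_⟩)
      have : (t:ℕ) - (a+1) = 0 := by omega
      rw [this]; exact hP0
    refine ⟨hW, ⟨?_, hA⟩, ?_⟩
    · intro t h1 h2
      have hb := hW.2 t
      have hne : (β t:ℕ) ≠ (t:ℕ) := by
        intro he
        rcases (hL t).1 he with h0 | ⟨hge, _⟩ <;> omega
      omega
    · intro s
      have hsb : a+1+(s:ℕ) < a+1+b := by have := s.isLt; omega
      rw [epsOf_lucky_iff a b β hW hA s]
      rw [hL ⟨a+1+(s:ℕ), hsb⟩,
        show ((⟨a+1+(s:ℕ), hsb⟩ : Fin (a+1+b)) : ℕ) = a+1+(s:ℕ) from rfl]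
      constructor
      · rintro (h0 | ⟨_, hp⟩)
        · omega
        · have : a+1+(s:ℕ) - (a+1) = (s:ℕ) := by omega
          rwa [this] at hp
      · intro hp
        refine Or.inr ⟨by omega, ?_⟩
        have : a+1+(s:ℕ) - (a+1) = (s:ℕ) := by omega
        rwa [this]
  · rintro ⟨hW, hF, hE⟩
    refine ⟨hW, ?_⟩
    intro i
    rcases Nat.eq_zero_or_pos (i:ℕ) with hi0 | hi1
    · have : (β i : ℕ) = (i:ℕ) := by have := hW.2 i; omega
      simp [this, hi0]
    rcases le_or_gt (i:ℕ) a with hia | hia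
    · have hlt := hF.1 i hi1 hia
      constructor
      · intro he; omega
      · rintro (h0 | ⟨hge, _⟩) <;> omega
    · have hs : (i:ℕ) - (a+1) < b := by have := i.isLt; omega
      have hidx : (⟨a+1+(((⟨(i:ℕ)-(a+1), hs⟩ : Fin b)):ℕ), by have := i.isLt; simp only; omega⟩ :
          Fin (a+1+b)) = i := by apply Fin.ext; simp only; omega
      have he := hE ⟨(i:ℕ)-(a+1), hs⟩
      rw [epsOf_lucky_iff a b β hW hF.2 ⟨(i:ℕ)-(a+1), hs⟩] at he
      rw [hidx] at he
      simp only at he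
      constructor
      · intro hll
        refine Or.inr ⟨by omega, ?_⟩
        apply he.1
        omega
      · rintro (h0 | ⟨_, hp⟩)
        · omega
        · have := he.2 hp
          omega

lemma mainAux (k : ℕ) : ∀ (n : ℕ) (l : Fin (k+1) → ℕ), StrictMono l → l 0 = 1 →
    (∀ j, l j ≤ n) →
    Nat.card {β : Fin n → Fin n // IsWIPF β ∧
        ∀ i : Fin n, ((β i : ℕ) = (i:ℕ) ↔ ∃ j, l j = (i:ℕ)+1)} =
      ∏ j : Fin (k+1), catalan
        (if h : (j : ℕ) + 1 < k+1 then l ⟨(j : ℕ) + 1, h⟩ - l j - 1 else n - l j) := by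
  induction k with
  | zero =>
    intro n l hl h0 hle
    have hn : 1 ≤ n := h0 ▸ hle 0
    have hiff : ∀ i : Fin n, ((∃ j : Fin 1, l j = (i:ℕ)+1) ↔
        ((i:ℕ) = 0 ∨ ((n-1)+1 ≤ (i:ℕ) ∧ (fun _ : ℕ => True) ((i:ℕ) - ((n-1)+1))))) := by
      intro i
      have hlt := i.isLt
      constructor
      · rintro ⟨j, hj⟩
        have : j = 0 := Subsingleton.elim _ _
        rw [this, h0] at hj
        left; omega
      · rintro (h0' | ⟨hge, _⟩)
        · exact ⟨0, by rw [h0]; omega⟩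
        · omega
    rw [Nat.card_congr (Equiv.subtypeEquivRight (fun β =>
      and_congr_right fun _ => forall_congr' fun i => iff_congr Iff.rfl (hiff i)))]
    rw [split_card_P n (n-1) 0 (by omega) (fun _ => True) trivial]
    rw [card_WIPF, card_fin_zero_subtype _ ⟨wipf_fin_zero, fun s => s.elim0⟩]
    rw [Fin.prod_univ_one]
    have : ¬((0 : Fin 1) : ℕ) + 1 < 0 + 1 := by simp
    rw [dif_neg this, h0, mul_one]
  | succ k IH =>
    intro n l hl h0 hle
    have h01 : (0 : Fin (k+2)) < 1 := by
      rw [Fin.lt_def]; simp [Fin.val_one]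
    have h2 : 2 ≤ l 1 := by have := hl h01; omega
    have hl1n : l 1 ≤ n := hle 1
    set a := l 1 - 2 with ha
    set b := n - (l 1 - 1) with hb
    have hab : n = a + 1 + b := by omega
    have hsucc1 : ∀ j : Fin (k+1), (1 : Fin (k+2)) ≤ j.succ := by
      intro j
      rw [Fin.le_def]
      simp [Fin.val_one]
    have hsge : ∀ j : Fin (k+1), a + 2 ≤ l j.succ := by
      intro j
      have := hl.monotone (hsucc1 j)
      omega
    set l' : Fin (k+1) → ℕ := fun j => l j.succ - (a+1) with hl'
    have hl'mono : StrictMono l' := by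
      intro j j' hjj
      have h1 := hl (show j.succ < j'.succ by rwa [Fin.succ_lt_succ_iff])
      have := hsge j
      simp only [hl']
      omega
    have hl'0 : l' 0 = 1 := by
      simp only [hl']
      have : (0 : Fin (k+1)).succ = 1 := rfl
      rw [this]
      omega
    have hl'le : ∀ j, l' j ≤ b := by
      intro j
      have := hle j.succ
      have := hsge j
      simp only [hl']
      omega
    have hiff : ∀ i : Fin n, ((∃ j : Fin (k+2), l j = (i:ℕ)+1) ↔
        ((i:ℕ) = 0 ∨ (a+1 ≤ (i:ℕ) ∧ (∃ j : Fin (k+1), l' j = ((i:ℕ) - (a+1))+1)))) := by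
      intro i
      constructor
      · rintro ⟨j, hj⟩
        rcases Fin.eq_zero_or_eq_succ j with rfl | ⟨j', rfl⟩
        · rw [h0] at hj; left; omega
        · right
          have := hsge j'
          refine ⟨by omega, j', ?_⟩
          simp only [hl']
          omega
      · rintro (hi0 | ⟨hge, j', hj'⟩)
        · exact ⟨0, by rw [h0]; omega⟩
        · refine ⟨j'.succ, ?_⟩
          have := hsge j'
          simp only [hl'] at hj'
          omega
    rw [Nat.card_congr (Equiv.subtypeEquivRight (fun β =>
      and_congr_right fun _ => forall_congr' fun i => iff_congr Iff.rfl (hiff i)))]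
    rw [split_card_P n a b hab (fun s => ∃ j : Fin (k+1), l' j = s+1) ⟨0, by rw [hl'0]⟩]
    rw [card_WIPF, IH b l' hl'mono hl'0 hl'le]
    conv_rhs => rw [Fin.prod_univ_succ]
    congr 1
    · have hc : ((0 : Fin (k+2)) : ℕ) + 1 < k + 2 := by simp
      rw [dif_pos hc]
      congr 1
      have : (⟨((0 : Fin (k+2)) : ℕ) + 1, hc⟩ : Fin (k+2)) = 1 := by
        apply Fin.ext; simp [Fin.val_one]
      rw [this, h0]
      omega
    · apply Finset.prod_congr rfl
      intro j _
      congr 1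
      have hjv : ((j.succ : Fin (k+2)) : ℕ) = (j : ℕ) + 1 := Fin.val_succ j
      by_cases hc : (j : ℕ) + 1 < k + 1
      · have hc2 : ((j.succ : Fin (k+2)) : ℕ) + 1 < k + 2 := by omega
        rw [dif_pos hc, dif_pos hc2]
        have hidx : (⟨((j.succ : Fin (k+2)) : ℕ) + 1, hc2⟩ : Fin (k+2)) =
            (⟨(j : ℕ) + 1, hc⟩ : Fin (k+1)).succ := by
          apply Fin.ext; simp
        rw [hidx]
        have h1 := hsge j
        have h2' := hsge ⟨(j : ℕ) + 1, hc⟩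
        simp only [hl']
        omega
      · have hc2 : ¬(((j.succ : Fin (k+2)) : ℕ) + 1 < k + 2) := by omega
        rw [dif_neg hc, dif_neg hc2]
        have h1 := hsge j
        have h3 := hle j.succ
        simp only [hl']
        omega

/-- Let `α` be a weakly increasing parking function of length `n` whose lucky set
(1-indexed) is enumerated by the strictly increasing `l : Fin k → ℕ`.  Then `1` is in
the lucky set, and the number of weakly increasing parking functions of length `n`
with exactly this lucky set is `∏_{j=1}^{k} C_{x_j}` where `x_j = l_{j+1} − l_j − 1`
for `j < k` and `x_k = n − l_k`. -/
theorem stmt10 (n k : ℕ) (hn : 0 < n) (hk : 0 < k)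
    (α : Fin n → Fin n) (hα : IsWIPF α)
    (l : Fin k → ℕ) (hl : StrictMono l)
    (hrange : ∀ j, 1 ≤ l j ∧ l j ≤ n)
    (henum : ∀ i : Fin n, ((α i : ℕ) = (i : ℕ) ↔ ∃ j, l j = (i : ℕ) + 1)) :
    (∃ j, l j = 1) ∧
      Nat.card {β : Fin n → Fin n // IsWIPF β ∧
          ∀ i : Fin n, ((β i : ℕ) = (i : ℕ) ↔ ∃ j, l j = (i : ℕ) + 1)} =
        ∏ j : Fin k, catalan
          (if h : (j : ℕ) + 1 < k then l ⟨(j : ℕ) + 1, h⟩ - l j - 1 else n - l j) := by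
  obtain ⟨k', rfl⟩ : ∃ k', k = k' + 1 := ⟨k - 1, by omega⟩
  have hzero : (α ⟨0, hn⟩ : ℕ) = 0 := Nat.le_zero.mp (hα.2 ⟨0, hn⟩)
  have hone : ∃ j, l j = 1 := by
    obtain ⟨j, hj⟩ := (henum ⟨0, hn⟩).1 hzero
    exact ⟨j, hj⟩
  have hl0 : l 0 = 1 := by
    obtain ⟨j, hj⟩ := hone
    have h1 := hl.monotone (Fin.zero_le j)
    have h2 := (hrange 0).1
    omega
  exact ⟨hone, mainAux k' n l hl hl0 (fun j => (hrange j).2)⟩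
end
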